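/- Suppose t > 0, k is locally integrable on ℝ²ⁿ, k(x,y) = Σ_{|α| ≤ N} M_α(x)·(x−y)^α·p_t(x,y) pointwise for locally integrable functions M_α, and |k(x,y)| ≤ p_t(x,y) for almost all x, y, where p_t(x,y) = t^{-n/2}exp(-π|x−y|²/t). Then M_α = 0 a.e. for all α with |α| ≥ 1, and |M_0(x)| ≤ 1 for almost all x. -/

import Mathlib

/-!
For almost every `x`, dividing the expansion by `p_t(x, y) > 0` shows that the polynomial
`P_x(z) = ∑ M_α(x) z^α` satisfies `‖P_x(x - y)‖ ≤ 1` for almost every `y`, hence for every `y`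
by continuity. A polynomial bounded on `ℝⁿ` is constant: on each line `s ↦ s • z` it restricts
to a bounded univariate polynomial, which must have degree `0`. So every coefficient `M_α(x)`
with `|α| ≥ 1` vanishes and `‖M_0(x)‖ = ‖P_x(0)‖ ≤ 1`.
-/

open Real MeasureTheory

/-- The heat kernel `p_t (x, y) = t^{-n/2} exp (-π ‖x - y‖² / t)`. -/
noncomputable def heatKernel {n : ℕ} (t : ℝ) (x y : EuclideanSpace ℝ (Fin n)) : ℝ :=
  t ^ (-(n : ℝ) / 2) * Real.exp (-π * ‖x - y‖ ^ 2 / t)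

open Filter

theorem Polynomial.degree_le_zero_of_norm_eval_ofReal_le {𝕜 : Type*} [RCLike 𝕜]
    {p : Polynomial 𝕜} {C : ℝ} (h : ∀ s : ℝ, ‖p.eval (s : 𝕜)‖ ≤ C) : p.degree ≤ 0 := by
  by_contra! hdeg
  have : Tendsto (fun s : ℝ => ‖p.eval (s : 𝕜)‖) atTop atTop :=
    p.tendsto_norm_atTop hdeg (by simpa using tendsto_abs_atTop_atTop)
  obtain ⟨s, hs⟩ := (this.eventually_gt_atTop C).exists
  exact (h s).not_gt hs

namespace MvPolynomial

variable {σ 𝕜 : Type*} [RCLike 𝕜] {P : MvPolynomial σ 𝕜} {B : ℝ}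

theorem eval_ofReal_eq_constantCoeff_of_norm_le
    (h : ∀ z : σ → ℝ, ‖eval (fun i => (z i : 𝕜)) P‖ ≤ B) (z : σ → ℝ) :
    eval (fun i => (z i : 𝕜)) P = constantCoeff P := by
  set q : Polynomial 𝕜 := aeval (fun i => Polynomial.C (z i : 𝕜) * Polynomial.X) P
  have hq : ∀ s : ℝ, q.eval (s : 𝕜) = eval (fun i => ((s * z i : ℝ) : 𝕜)) P := fun s => by
    rw [← Polynomial.coe_aeval_eq_eval, comp_aeval_apply]
    simp only [map_mul, Polynomial.aeval_C, Polynomial.aeval_X]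
    refine congrArg (eval · P) (_root_.funext fun i => ?_)
    simp [mul_comm]
  have hq_const := Polynomial.eq_C_of_degree_le_zero
    (Polynomial.degree_le_zero_of_norm_eval_ofReal_le fun s => (hq s).symm ▸ h _)
  calc eval (fun i => (z i : 𝕜)) P = q.eval ((1 : ℝ) : 𝕜) := by rw [hq]; simp
    _ = q.eval ((0 : ℝ) : 𝕜) := by rw [hq_const]; simp
    _ = constantCoeff P := by rw [hq]; simp [← eval_zero]

theorem eq_C_of_norm_eval_ofReal_le (h : ∀ z : σ → ℝ, ‖eval (fun i => (z i : 𝕜)) P‖ ≤ B) :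
    P = C (constantCoeff P) := by
  refine funext_set (fun _ => Set.range ((↑) : ℝ → 𝕜))
    (fun _ => Set.infinite_range_of_injective RCLike.ofReal_injective) fun x hx => ?_
  choose z hz using fun i => hx i (Set.mem_univ i)
  obtain rfl : (fun i => (z i : 𝕜)) = x := _root_.funext hz
  rw [eval_ofReal_eq_constantCoeff_of_norm_le h, eval_C]

end MvPolynomial

theorem MeasureTheory.Measure.forall_of_ae_of_isClosed {X : Type*} [TopologicalSpace X]
    [MeasurableSpace X] {μ : Measure X} [μ.IsOpenPosMeasure] {p : X → Prop}
    (hp : IsClosed {x | p x}) (h : ∀ᵐ x ∂μ, p x) (x : X) : p x :=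
  hp.closure_subset (dense_of_ae h x)

namespace MvPolynomial

variable {R : Type*} [CommSemiring R] {n : ℕ} (N : ℕ) (c : (Fin n → ℕ) → R)

noncomputable def ofCoeffsDegreeLE : MvPolynomial (Fin n) R :=
  ∑ α ∈ Finset.univ.filter (fun α : Fin n → Fin (N + 1) => (∑ i, (α i : ℕ)) ≤ N),
    monomial (Finsupp.equivFunOnFinite.symm fun i => (α i : ℕ)) (c fun i => α i)

theorem eval_ofCoeffsDegreeLE (z : Fin n → R) :
    eval z (ofCoeffsDegreeLE N c) =
      ∑ α ∈ Finset.univ.filter (fun α : Fin n → Fin (N + 1) => (∑ i, (α i : ℕ)) ≤ N),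
        c (fun i => α i) * ∏ i, z i ^ (α i : ℕ) := by
  simp [ofCoeffsDegreeLE, eval_monomial, Finsupp.prod_fintype]

theorem coeff_ofCoeffsDegreeLE {m : Fin n →₀ ℕ} (hm : ∑ i, m i ≤ N) :
    coeff m (ofCoeffsDegreeLE N c) = c m := by
  have hm_lt (i : Fin n) : m i < N + 1 :=
    Nat.lt_succ_of_le ((Finset.single_le_sum (fun j _ => Nat.zero_le (m j))
      (Finset.mem_univ i)).trans hm)
  classical
  rw [ofCoeffsDegreeLE, coeff_sum, Finset.sum_eq_single (fun i => ⟨m i, hm_lt i⟩)]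
  · simp [Finsupp.equivFunOnFinite_symm_coe]
  · intro α _ hα
    rw [coeff_monomial, if_neg]
    intro h
    exact hα (_root_.funext fun i => Fin.ext (DFunLike.congr_fun h i))
  · simp [hm]

theorem constantCoeff_ofCoeffsDegreeLE : constantCoeff (ofCoeffsDegreeLE N c) = c 0 :=
  coeff_ofCoeffsDegreeLE N c (m := 0) (by simp)

end MvPolynomial

open MvPolynomial

theorem heatKernel_pos {n : ℕ} {t : ℝ} (ht : 0 < t) (x y : EuclideanSpace ℝ (Fin n)) :
    0 < heatKernel t x y :=
  mul_pos (Real.rpow_pos_of_pos ht _) (Real.exp_pos _)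

theorem norm_eval_ofCoeffsDegreeLE_le_one {n : ℕ} {t : ℝ} (ht : 0 < t) {N : ℕ}
    {k : EuclideanSpace ℝ (Fin n) × EuclideanSpace ℝ (Fin n) → ℂ}
    {M : (Fin n → ℕ) → EuclideanSpace ℝ (Fin n) → ℂ}
    (hrep : ∀ x y : EuclideanSpace ℝ (Fin n),
      k (x, y) = ∑ α ∈ Finset.univ.filter
          (fun α : Fin n → Fin (N + 1) => (∑ i, (α i : ℕ)) ≤ N),
        M (fun i => (α i : ℕ)) x * (∏ i, ((x i - y i : ℝ) : ℂ) ^ (α i : ℕ)) *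
          (heatKernel t x y : ℂ))
    {x : EuclideanSpace ℝ (Fin n)} (hx : ∀ᵐ y, ‖k (x, y)‖ ≤ heatKernel t x y)
    (z : Fin n → ℝ) :
    ‖eval (fun i => (z i : ℂ)) (ofCoeffsDegreeLE N fun α => M α x)‖ ≤ 1 := by
  have hae : ∀ᵐ y : EuclideanSpace ℝ (Fin n),
      ‖eval (fun i => ((x i - y i : ℝ) : ℂ)) (ofCoeffsDegreeLE N fun α => M α x)‖ ≤ 1 := by
    filter_upwards [hx] with y hy
    rwa [hrep, ← Finset.sum_mul, ← eval_ofCoeffsDegreeLE N fun α => M α x, norm_mul,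
      Complex.norm_real, Real.norm_of_nonneg (heatKernel_pos ht x y).le,
      mul_le_iff_le_one_left (heatKernel_pos ht x y)] at hy
  have hall := Measure.forall_of_ae_of_isClosed
    (isClosed_le ((continuous_eval _).comp (by fun_prop)).norm continuous_const) hae
  simpa using hall (x - WithLp.toLp 2 z)

theorem gaussian_bound_kills_polynomial_part_general {n : ℕ} (t : ℝ) (ht : 0 < t) (N : ℕ)
    (k : EuclideanSpace ℝ (Fin n) × EuclideanSpace ℝ (Fin n) → ℂ)
    (M : (Fin n → ℕ) → EuclideanSpace ℝ (Fin n) → ℂ)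
    (hrep : ∀ x y : EuclideanSpace ℝ (Fin n),
      k (x, y) = ∑ α ∈ Finset.univ.filter
          (fun α : Fin n → Fin (N + 1) => (∑ i, (α i : ℕ)) ≤ N),
        M (fun i => (α i : ℕ)) x * (∏ i, ((x i - y i : ℝ) : ℂ) ^ (α i : ℕ)) *
          (heatKernel t x y : ℂ))
    (hbound : ∀ᵐ p : EuclideanSpace ℝ (Fin n) × EuclideanSpace ℝ (Fin n),
      ‖k p‖ ≤ heatKernel t p.1 p.2) :
    (∀ α : Fin n → ℕ, (∑ i, α i) ≤ N → 1 ≤ ∑ i, α i → ∀ᵐ x, M α x = 0) ∧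
      ∀ᵐ x, ‖M (fun _ => 0) x‖ ≤ 1 := by
  rw [Measure.volume_eq_prod] at hbound
  have hbound_x := Measure.ae_ae_of_ae_prod hbound
  have hconst : ∀ᵐ x, ofCoeffsDegreeLE N (M · x) = C (M (fun _ => 0) x) := by
    filter_upwards [hbound_x] with x hx
    rw [eq_C_of_norm_eval_ofReal_le (norm_eval_ofCoeffsDegreeLE_le_one ht hrep hx),
      constantCoeff_ofCoeffsDegreeLE]
    rfl
  refine ⟨fun α hαN hα1 => ?_, ?_⟩
  · filter_upwards [hconst] with x hx
    have hcoeff := coeff_ofCoeffsDegreeLE N (M · x) (m := Finsupp.equivFunOnFinite.symm α) hαN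
    rw [hx, coeff_C, if_neg] at hcoeff
    · exact hcoeff.symm
    · intro h0
      obtain rfl : 0 = α := congrArg (⇑) h0
      simp at hα1
  · filter_upwards [hconst, hbound_x] with x hx hbx
    simpa [hx] using norm_eval_ofCoeffsDegreeLE_le_one ht hrep hbx 0

/-- A pointwise Gaussian bound kills the nonconstant polynomial factors in the kernel
expansion. -/
theorem gaussian_bound_kills_polynomial_part {n : ℕ} (t : ℝ) (ht : 0 < t) (N : ℕ)
    (k : EuclideanSpace ℝ (Fin n) × EuclideanSpace ℝ (Fin n) → ℂ)
    (hk : LocallyIntegrable k volume)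
    (M : (Fin n → ℕ) → EuclideanSpace ℝ (Fin n) → ℂ)
    (hM : ∀ α : Fin n → ℕ, (∑ i, α i) ≤ N → LocallyIntegrable (M α) volume)
    (hrep : ∀ x y : EuclideanSpace ℝ (Fin n),
      k (x, y) = ∑ α ∈ Finset.univ.filter
          (fun α : Fin n → Fin (N + 1) => (∑ i, (α i : ℕ)) ≤ N),
        M (fun i => (α i : ℕ)) x * (∏ i, ((x i - y i : ℝ) : ℂ) ^ (α i : ℕ)) *
          (heatKernel t x y : ℂ))
    (hbound : ∀ᵐ p : EuclideanSpace ℝ (Fin n) × EuclideanSpace ℝ (Fin n),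
      ‖k p‖ ≤ heatKernel t p.1 p.2) :
    (∀ α : Fin n → ℕ, (∑ i, α i) ≤ N → 1 ≤ ∑ i, α i → ∀ᵐ x, M α x = 0) ∧
      ∀ᵐ x, ‖M (fun _ => 0) x‖ ≤ 1 :=
  gaussian_bound_kills_polynomial_part_general t ht N k M hrep hbound
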